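/- arXiv:1405.2522 — 2 statements merged into one kernel-verified Lean document; each statement's English description precedes it below -/
import Mathlib

section
/- Let w₋ < w₊, ε > 0, and let w be the unique smooth solution of ∂_tw + w∂_xw = 0 with w(0,x) = (w₊+w₋)/2 + ((w₊−w₋)/2)·tanh(εx). Define the centered rarefaction fan w^R(z) = w₋ for z < w₋, w^R(z) = z for w₋ ≤ z ≤ w₊, and w^R(z) = w₊ for z > w₊. Then lim_{t→+∞} sup_{x∈ℝ} |w(t,x) − w^R(x/t)| = 0. -/
/-- The conditions for `w` to be a smooth solution on `[0,∞)×ℝ` of the Burgers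
equation `∂_t w + w ∂_x w = 0` with initial datum `w₀`. -/
def IsBurgersSolution (w₀ : ℝ → ℝ) (w : ℝ → ℝ → ℝ) : Prop :=
  ContDiffOn ℝ (⊤ : ℕ∞) (fun p : ℝ × ℝ => w p.1 p.2) {p : ℝ × ℝ | 0 ≤ p.1} ∧
  (∀ x, w 0 x = w₀ x) ∧
  (∀ t ≥ (0:ℝ), ∀ x : ℝ,
    derivWithin (fun s => w s x) (Set.Ici 0) t + w t x * deriv (fun y => w t y) x = 0)

/-- The centered rarefaction fan connecting `w₋` and `w₊`. -/
noncomputable def rarefactionFan (wm wp : ℝ) (z : ℝ) : ℝ :=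
  if z < wm then wm else if z ≤ wp then z else wp


lemma my_tanh_formula (u : ℝ) : Real.tanh u = 1 - 2 / (Real.exp (2*u) + 1) := by
  rw [Real.tanh_eq_sinh_div_cosh, Real.sinh_eq, Real.cosh_eq]
  have e : Real.exp (2*u) = Real.exp u * Real.exp u := by
    rw [← Real.exp_add]; ring_nf
  have h := Real.exp_pos u
  have h2 : Real.exp u * Real.exp u + 1 > 0 := by positivity
  rw [e, Real.exp_neg]
  field_simp
  ring

lemma my_tanh_lt_one (u : ℝ) : Real.tanh u < 1 := by
  rw [my_tanh_formula]
  have h : (0:ℝ) < 2 / (Real.exp (2*u) + 1) := by positivity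
  linarith

lemma my_neg_one_lt_tanh (u : ℝ) : -1 < Real.tanh u := by
  rw [my_tanh_formula]
  have h1 : (0:ℝ) < Real.exp (2*u) + 1 := by positivity
  have h2 : 2 / (Real.exp (2*u) + 1) < 2 := by
    rw [div_lt_iff₀ h1]
    nlinarith [Real.exp_pos (2*u)]
  linarith

lemma my_tanh_mono {a b : ℝ} (hab : a ≤ b) : Real.tanh a ≤ Real.tanh b := by
  rw [my_tanh_formula, my_tanh_formula]
  have h1 : (0:ℝ) < Real.exp (2*a) + 1 := by positivity
  have h2 : Real.exp (2*a) ≤ Real.exp (2*b) := Real.exp_le_exp.2 (by linarith)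
  have h3 : 2 / (Real.exp (2*b) + 1) ≤ 2 / (Real.exp (2*a) + 1) := by
    apply div_le_div_of_nonneg_left (by norm_num) h1 (by linarith)
  linarith

lemma my_tanh_large {η ε : ℝ} (hη : 0 < η) (hε : 0 < ε) :
    ∃ M : ℝ, 0 < M ∧ 1 - Real.tanh (ε * M) ≤ η := by
  refine ⟨max 1 (Real.log (2/η) / (2*ε)), lt_of_lt_of_le one_pos (le_max_left _ _), ?_⟩
  set M := max 1 (Real.log (2/η) / (2*ε)) with hM
  have hεM : Real.log (2/η) ≤ 2 * ε * M := by
    have h1 : Real.log (2/η) / (2*ε) ≤ M := le_max_right _ _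
    calc Real.log (2/η) = (Real.log (2/η) / (2*ε)) * (2*ε) := by field_simp
    _ ≤ M * (2*ε) := by apply mul_le_mul_of_nonneg_right h1; positivity
    _ = 2 * ε * M := by ring
  have h2η : (0:ℝ) < 2/η := by positivity
  have hexp : 2/η ≤ Real.exp (2 * (ε * M)) := by
    calc 2/η = Real.exp (Real.log (2/η)) := (Real.exp_log h2η).symm
    _ ≤ Real.exp (2 * ε * M) := Real.exp_le_exp.2 hεM
    _ = Real.exp (2 * (ε * M)) := by ring_nf
  rw [my_tanh_formula]
  have h3 : (0:ℝ) < Real.exp (2 * (ε * M)) + 1 := by positivity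
  have h4 : 2 / (Real.exp (2 * (ε * M)) + 1) ≤ 2 / (2/η) := by
    apply div_le_div_of_nonneg_left (by norm_num) h2η (by linarith)
  have h5 : 2 / (2/η) = η := by field_simp
  linarith


lemma fan_lip {wm wp c z : ℝ} (h1 : wm ≤ c) (h2 : c ≤ wp) :
    |rarefactionFan wm wp z - c| ≤ |z - c| := by
  unfold rarefactionFan
  split_ifs with ha hb
  · rw [abs_of_nonpos (by linarith), abs_of_nonpos (by linarith)]; linarith
  · exact le_refl _
  · rw [abs_of_nonneg (by linarith), abs_of_nonneg (by linarith)]; linarith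

lemma fan_right {wm wp c z : ℝ} (h1 : wm ≤ c) (h2 : c ≤ wp) (h3 : c ≤ z) :
    |rarefactionFan wm wp z - c| ≤ wp - c := by
  unfold rarefactionFan
  split_ifs with ha hb <;> (rw [abs_le]; constructor <;> linarith)

lemma fan_left {wm wp c z : ℝ} (h1 : wm ≤ c) (h2 : c ≤ wp) (h3 : z ≤ c) :
    |rarefactionFan wm wp z - c| ≤ c - wm := by
  unfold rarefactionFan
  split_ifs with ha hb <;> (rw [abs_le]; constructor <;> linarith)


theorem burgers_implicit (w₀ : ℝ → ℝ) (w : ℝ → ℝ → ℝ)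
    (hsol : IsBurgersSolution w₀ w) {t : ℝ} (ht : 0 < t) (x : ℝ) :
    w t x = w₀ (x - t * w t x) := by
  obtain ⟨hreg, hinit, hpde⟩ := hsol
  set F : ℝ × ℝ → ℝ := fun p => w p.1 p.2 with hFdef
  set S : Set (ℝ × ℝ) := {p : ℝ × ℝ | 0 ≤ p.1} with hSdef
  set c : ℝ := w t x with hcdef
  set γ : ℝ → ℝ := fun s => x + (s - t) * c with hγdef
  set P : ℝ → ℝ × ℝ := fun s => (s, γ s) with hPdef
  have hSopen : IsOpen {p : ℝ × ℝ | 0 < p.1} := isOpen_lt continuous_const continuous_fst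
  have hSnhds : ∀ s : ℝ, 0 < s → S ∈ nhds (P s) := by
    intro s hs
    exact Filter.mem_of_superset (hSopen.mem_nhds (by simpa [hPdef] using hs))
      (fun p hp => show (0:ℝ) ≤ p.1 from le_of_lt hp)
  have hdiff : DifferentiableOn ℝ F S := hreg.differentiableOn (by simp)
  have hSprod : S = Set.Ici (0:ℝ) ×ˢ (Set.univ : Set ℝ) := by
    ext p; simp [hSdef, Set.mem_prod]
  have hUD : UniqueDiffOn ℝ S := by
    rw [hSprod]; exact (uniqueDiffOn_Ici 0).prod uniqueDiffOn_univ
  have hcontD : ContinuousOn (fun p => fderivWithin ℝ F S p) S :=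
    hreg.continuousOn_fderivWithin hUD (by simp)
  have hPcont : Continuous P := by
    refine continuous_id.prodMk ?_
    exact continuous_const.add ((continuous_id.sub continuous_const).mul continuous_const)
  have hmaps : Set.MapsTo P (Set.Icc 0 t) S := fun s hs => by
    simp only [hSdef, hPdef, Set.mem_setOf_eq]; exact hs.1
  set A : ℝ → ℝ := fun s => fderivWithin ℝ F S (P s) ((0:ℝ), (1:ℝ)) with hAdef
  have hAcont : ContinuousOn A (Set.Icc 0 t) := by
    have h1 : ContinuousOn (fun s => fderivWithin ℝ F S (P s)) (Set.Icc 0 t) :=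
      hcontD.comp hPcont.continuousOn hmaps
    exact (ContinuousLinearMap.apply ℝ ℝ ((0:ℝ), (1:ℝ))).continuous.comp_continuousOn h1
  obtain ⟨C, hC⟩ := isCompact_Icc.exists_bound_of_continuousOn hAcont
  set K : ℝ := max C 0 with hKdef
  have hK0 : 0 ≤ K := le_max_right _ _
  have hKb : ∀ s ∈ Set.Icc (0:ℝ) t, |A s| ≤ K := fun s hs =>
    le_trans (by simpa using hC s hs) (le_max_left _ _)
  set B : ℝ → ℝ := fun s => max (-K) (min K (A s)) with hBdef
  have hBb : ∀ s, |B s| ≤ K := by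
    intro s
    rw [abs_le]
    constructor
    · exact le_max_left _ _
    · exact max_le (by linarith) (min_le_left _ _)
  have hBeq : ∀ s ∈ Set.Icc (0:ℝ) t, B s = A s := by
    intro s hs
    have := hKb s hs
    rw [abs_le] at this
    simp only [hBdef]
    rw [min_eq_right this.2, max_eq_right this.1]
  set v : ℝ → ℝ → ℝ := fun s y => -(B s) * y with hvdef
  set K' : NNReal := Real.toNNReal K with hK'def
  have hv : ∀ s, LipschitzOnWith K' (v s) Set.univ := by
    intro s
    apply LipschitzWith.lipschitzOnWith
    apply LipschitzWith.of_dist_le_mul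
    intro y1 y2
    have h1 : dist (v s y1) (v s y2) = |B s| * dist y1 y2 := by
      simp only [hvdef, Real.dist_eq, ← mul_sub, abs_mul, abs_neg]
    rw [h1]
    have : (K' : ℝ) = K := Real.coe_toNNReal K hK0
    rw [this]
    exact mul_le_mul_of_nonneg_right (hBb s) dist_nonneg
  set f : ℝ → ℝ := fun s => F (P s) - c with hfdef
  have hfcont : ContinuousOn f (Set.Icc 0 t) :=
    (hreg.continuousOn.comp hPcont.continuousOn hmaps).sub continuousOn_const
  have hf' : ∀ s ∈ Set.Ioc (0:ℝ) t, HasDerivWithinAt f (v s (f s)) (Set.Iic s) s := by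
    intro s hs
    have hs0 : 0 < s := hs.1
    have hmem : S ∈ nhds (P s) := hSnhds s hs0
    have hdF : DifferentiableAt ℝ F (P s) := hdiff.differentiableAt hmem
    set D := fderiv ℝ F (P s) with hDdef
    have hDs : HasFDerivAt F D (P s) := hdF.hasFDerivAt
    have hPd : HasDerivAt P ((1:ℝ), c) s := by
      refine (hasDerivAt_id s).prodMk ?_
      simpa [hγdef] using (((hasDerivAt_id s).sub_const t).mul_const c).const_add x
    have hhd : HasDerivAt (fun s' => F (P s')) (D (1, c)) s := hDs.comp_hasDerivAt s hPd
    have hQd : HasDerivAt (fun s' => w s' (γ s)) (D (1, 0)) s := by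
      have hp : HasDerivAt (fun s' : ℝ => (s', γ s)) ((1:ℝ), (0:ℝ)) s :=
        (hasDerivAt_id s).prodMk (hasDerivAt_const s (γ s))
      exact HasFDerivAt.comp_hasDerivAt (f := fun s' : ℝ => (s', γ s)) s hDs hp
    have hRd : HasDerivAt (fun y => w s y) (D (0, 1)) (γ s) := by
      have hp : HasDerivAt (fun y : ℝ => ((s : ℝ), y)) ((0:ℝ), (1:ℝ)) (γ s) :=
        (hasDerivAt_const (γ s) s).prodMk (hasDerivAt_id (γ s))
      exact HasFDerivAt.comp_hasDerivAt (f := fun y : ℝ => ((s:ℝ), y)) (γ s) hDs hp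
    have hpde' := hpde s hs0.le (γ s)
    have e1 : derivWithin (fun s' => w s' (γ s)) (Set.Ici 0) s = D (1, 0) := by
      rw [derivWithin_of_mem_nhds (Ici_mem_nhds hs0)]
      exact hQd.deriv
    have e2 : deriv (fun y => w s y) (γ s) = D (0, 1) := hRd.deriv
    rw [e1, e2] at hpde'
    have eA : A s = D (0, 1) := by
      simp only [hAdef, hDdef]
      rw [fderivWithin_of_mem_nhds hmem]
    have eD : D (1, c) = D (1, 0) + c * D (0, 1) := by
      have h12 : ((1 : ℝ), c) = ((1:ℝ), (0:ℝ)) + c • ((0 : ℝ), (1 : ℝ)) := by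
        simp [Prod.ext_iff]
      rw [h12, map_add, map_smul]
      simp
    have hval : D (1, c) = v s (f s) := by
      simp only [hvdef, hfdef]
      rw [hBeq s ⟨hs0.le, hs.2⟩, eA, eD]
      have hFP : F (P s) = w s (γ s) := rfl
      rw [hFP]
      linarith [mul_comm (w s (γ s)) (D (0,1)), hpde']
    have : HasDerivAt f (v s (f s)) s := by
      rw [← hval]
      exact hhd.sub_const c
    exact this.hasDerivWithinAt
  have hg' : ∀ s ∈ Set.Ioc (0:ℝ) t, HasDerivWithinAt (fun _ : ℝ => (0:ℝ)) (v s 0) (Set.Iic s) s := by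
    intro s _
    have : v s 0 = 0 := by simp [hvdef]
    rw [this]
    exact hasDerivWithinAt_const s _ 0
  have hb : f t = (fun _ : ℝ => (0:ℝ)) t := by
    simp only [hfdef, hPdef, hγdef, hFdef]
    simp [hcdef]
  have heq := ODE_solution_unique_of_mem_Icc_left (s := fun _ => Set.univ) (fun s _ => hv s)
    hfcont hf' (fun _ _ => trivial) continuousOn_const hg' (fun _ _ => trivial) hb
  have h0 := heq (Set.mem_Icc.mpr ⟨le_refl 0, ht.le⟩)
  simp only [hfdef, hPdef, hγdef, hFdef] at h0
  have : w 0 (x + (0 - t) * c) = c := by linarith [h0]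
  rw [hinit] at this
  show c = w₀ (x - t * c)
  rw [show x - t * c = x + (0 - t) * c by ring]
  exact this.symm
set_option maxHeartbeats 1000000 in
/-- **Lemma 2.1 (iii): uniform convergence toward the centered rarefaction fan.**
The smooth solution `w` of Burgers' equation with smoothed-out rarefaction data
satisfies `lim_{t→+∞} sup_{x∈ℝ} |w(t,x) − w^R(x/t)| = 0`. -/
theorem burgers_rarefaction_asymptotics
    (wm wp ε : ℝ) (hw : wm < wp) (hε : 0 < ε)
    (w : ℝ → ℝ → ℝ)
    (hsol : IsBurgersSolution
      (fun x => (wp + wm) / 2 + (wp - wm) / 2 * Real.tanh (ε * x)) w) :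
    ∀ δ : ℝ, 0 < δ → ∃ T : ℝ, 0 < T ∧ ∀ t ≥ T, ∀ x : ℝ,
      |w t x - rarefactionFan wm wp (x / t)| ≤ δ := by

  intro δ hδ
  obtain ⟨hreg, hinit, hpde⟩ := id hsol
  set m : ℝ := (wp + wm) / 2 with hm
  set r : ℝ := (wp - wm) / 2 with hrdef
  have hr : 0 < r := by rw [hrdef]; linarith
  have hwm : m - r = wm := by rw [hm, hrdef]; ring
  have hwp : m + r = wp := by rw [hm, hrdef]; ring
  set η : ℝ := δ / (2 * r) with hηdef
  have hη : 0 < η := by positivity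
  obtain ⟨M, hM0, hMη⟩ := my_tanh_large hη hε
  set T : ℝ := max 1 (2 * M / δ) with hT
  refine ⟨T, lt_of_lt_of_le one_pos (le_max_left _ _), ?_⟩
  intro t htT x
  have ht0 : 0 < t := lt_of_lt_of_le one_pos ((le_max_left _ _).trans htT)
  have himp := burgers_implicit _ w hsol ht0 x
  set c : ℝ := w t x with hcdef
  set x₀ : ℝ := x - t * c with hx₀
  have himp' : c = m + r * Real.tanh (ε * x₀) := himp
  have htanh1 : Real.tanh (ε * x₀) < 1 := my_tanh_lt_one _
  have htanh2 : -1 < Real.tanh (ε * x₀) := my_neg_one_lt_tanh _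
  have hc1 : wm ≤ c := by rw [← hwm, himp']; nlinarith
  have hc2 : c ≤ wp := by rw [← hwp, himp']; nlinarith
  set z : ℝ := x / t with hz
  have hzc : z - c = x₀ / t := by
    rw [hz, hx₀]; field_simp
  have hrη : r * η = δ / 2 := by
    rw [hηdef]; field_simp
  have key : |rarefactionFan wm wp z - c| ≤ δ / 2 := by
    rcases le_total x₀ (-M) with hcase | hcase
    · -- far left : c close to wm and z ≤ c
      have hmono : Real.tanh (ε * M) ≤ Real.tanh (-(ε * x₀)) :=
        my_tanh_mono (by nlinarith)
      have hneg : Real.tanh (-(ε * x₀)) = -Real.tanh (ε * x₀) := Real.tanh_neg _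
      have hclose : c - wm ≤ δ / 2 := by
        rw [← hwm, himp']
        have h1 : 1 + Real.tanh (ε * x₀) ≤ η := by
          rw [hneg] at hmono; linarith
        nlinarith
      have hzle : z ≤ c := by
        rw [← sub_nonpos, hzc]
        apply div_nonpos_of_nonpos_of_nonneg (by linarith) ht0.le
      exact le_trans (fan_left hc1 hc2 hzle) hclose
    rcases le_total M x₀ with hcase2 | hcase2
    · -- far right : c close to wp and c ≤ z
      have hmono : Real.tanh (ε * M) ≤ Real.tanh (ε * x₀) :=
        my_tanh_mono (by nlinarith)
      have hclose : wp - c ≤ δ / 2 := by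
        rw [← hwp, himp']
        nlinarith
      have hzge : c ≤ z := by
        rw [← sub_nonneg, hzc]
        apply div_nonneg (by linarith) ht0.le
      exact le_trans (fan_right hc1 hc2 hzge) hclose
    · -- middle : |x₀| ≤ M
      have habs : |z - c| ≤ M / t := by
        rw [hzc, abs_div, abs_of_pos ht0]
        have hxM : |x₀| ≤ M := abs_le.2 ⟨hcase, hcase2⟩
        gcongr
      have hMt : M / t ≤ δ / 2 := by
        have h1 : 2 * M / δ ≤ t := (le_max_right _ _).trans htT
        rw [div_le_div_iff₀ ht0 (by norm_num : (0:ℝ) < 2)]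
        have h2 : 2 * M ≤ δ * t := by
          calc 2 * M = δ * (2 * M / δ) := by field_simp
          _ ≤ δ * t := by apply mul_le_mul_of_nonneg_left h1 hδ.le
        linarith
      exact le_trans (fan_lip hc1 hc2) (habs.trans hMt)
  calc |w t x - rarefactionFan wm wp (x / t)| = |rarefactionFan wm wp z - c| := by
        rw [abs_sub_comm]
  _ ≤ δ / 2 := key
  _ ≤ δ := by linarith
end

section
/- Let A > 0, v > 0 and g ≥ 0 be real numbers. Then the real symmetric 3×3 matrix M with entries M₁₁ = (5/9)A·v^{−11/3}, M₁₂ = M₂₁ = −(1/3)A·v^{−8/3}, M₁₃ = M₃₁ = 0, M₂₂ = (1/2)A·v^{−5/3}, M₂₃ = M₃₂ = (1/2)A·v^{−2/3} / √((5/3)A·v^{4/3} + v·g), M₃₃ = v^{−1} is positive definite; indeed its leading principal minors satisfy Δ₁ = (5/9)A·v^{−11/3} > 0, Δ₂ = (1/6)A²·v^{−16/3} > 0, and Δ₃ = (1/6)A²·v^{−19/3} − (5/36)A³·v^{−5}/((5/3)A·v^{4/3} + v·g) > 0. -/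
/-!
Writing `v = u³` turns every power of `v` in `M` into an integer power of `u`. The matrix is
symmetric tridiagonal, `!![a, b, 0; b, d, e; 0, e, f]`, so completing squares shows it is positive
definite once its leading principal minors `a`, `ad - b²`, `(ad - b²)f - ae²` are positive. The
first two are visibly positive; in the third, `g ≥ 0` bounds the square-root argument below by
`(5/3)Av^{4/3}`, so the subtracted term is at most half of `(1/6)A²v^{-19/3}`.
-/

namespace Matrix

section CommRing

variable {R : Type*} [CommRing R]

theorem det_symm_tridiag_fin_three (a b d e f : R) :
    !![a, b, 0; b, d, e; 0, e, f].det = (a * d - b ^ 2) * f - a * e ^ 2 := by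
  simp only [det_fin_three, of_apply, cons_val', cons_val_zero, cons_val_fin_one, cons_val_one,
    cons_val, mul_zero, add_zero, zero_mul, sub_zero]
  ring

theorem dotProduct_mulVec_symm_tridiag_fin_three (a b d e f : R) (x : Fin 3 → R) :
    x ⬝ᵥ (!![a, b, 0; b, d, e; 0, e, f] *ᵥ x) =
      a * x 0 ^ 2 + 2 * b * x 0 * x 1 + d * x 1 ^ 2 + 2 * e * x 1 * x 2 + f * x 2 ^ 2 := by
  simp only [dotProduct, mulVec, of_apply, cons_val', cons_val_fin_one, Fin.sum_univ_three,
    cons_val_zero, cons_val_one, cons_val, zero_mul, add_zero, zero_add]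
  ring

end CommRing

variable {R : Type*} [Field R] [LinearOrder R] [IsStrictOrderedRing R]

theorem symm_tridiag_quadratic_pos {a b d e f x y z : R} (h₁ : 0 < a) (h₂ : 0 < a * d - b ^ 2)
    (h₃ : 0 < (a * d - b ^ 2) * f - a * e ^ 2) (hxyz : x ≠ 0 ∨ y ≠ 0 ∨ z ≠ 0) :
    0 < a * x ^ 2 + 2 * b * x * y + d * y ^ 2 + 2 * e * y * z + f * z ^ 2 := by
  set Δ₂ := a * d - b ^ 2
  set Δ₃ := Δ₂ * f - a * e ^ 2
  have hsq : a * Δ₂ * (a * x ^ 2 + 2 * b * x * y + d * y ^ 2 + 2 * e * y * z + f * z ^ 2) =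
      Δ₂ * (a * x + b * y) ^ 2 + (Δ₂ * y + a * e * z) ^ 2 + a * Δ₃ * z ^ 2 := by
    simp only [Δ₃, Δ₂]
    ring
  refine pos_of_mul_pos_right (hsq ▸ ?_) (mul_pos h₁ h₂).le
  rcases eq_or_ne z 0 with rfl | hz
  · rcases eq_or_ne y 0 with rfl | hy
    · have hx : x ≠ 0 := by simpa using hxyz
      simp only [mul_zero, add_zero, zero_pow two_ne_zero]
      positivity
    · have : 0 < (Δ₂ * y) ^ 2 := by positivity
      simp only [mul_zero, add_zero, zero_pow two_ne_zero]
      positivity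
  · have : 0 < a * Δ₃ * z ^ 2 := by positivity
    positivity

theorem posDef_symm_tridiag_fin_three [StarRing R] [TrivialStar R] {a b d e f : R} (h₁ : 0 < a)
    (h₂ : 0 < a * d - b ^ 2) (h₃ : 0 < (a * d - b ^ 2) * f - a * e ^ 2) :
    !![a, b, 0; b, d, e; 0, e, f].PosDef := by
  refine PosDef.of_dotProduct_mulVec_pos ?_ fun x hx ↦ ?_
  · ext i j
    fin_cases i <;> fin_cases j <;> simp
  rw [star_trivial, dotProduct_mulVec_symm_tridiag_fin_three]
  refine symm_tridiag_quadratic_pos h₁ h₂ h₃ ?_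
  by_contra! h
  exact hx (by ext i; fin_cases i <;> simp [h.1, h.2.1, h.2.2])

end Matrix

theorem Real.pow_three_rpow_div_three {u : ℝ} (hu : 0 ≤ u) (x : ℝ) :
    (u ^ 3) ^ (x / 3) = u ^ x := by
  rw [← Real.rpow_natCast_mul hu]
  ring_nf

theorem energy_minor_two (A : ℝ) {u : ℝ} (hu : u ≠ 0) :
    5 / 9 * A * (u ^ 11)⁻¹ * (1 / 2 * A * (u ^ 5)⁻¹) - (-(1 / 3) * A * (u ^ 8)⁻¹) ^ 2 =
      1 / 6 * A ^ 2 * (u ^ 16)⁻¹ := by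
  field_simp
  ring

theorem energy_minor_three (A : ℝ) {u s : ℝ} (hu : u ≠ 0) (hs : 0 < s) :
    1 / 6 * A ^ 2 * (u ^ 16)⁻¹ * (u ^ 3)⁻¹ -
        5 / 9 * A * (u ^ 11)⁻¹ * (1 / 2 * A * (u ^ 2)⁻¹ / √s) ^ 2 =
      1 / 6 * A ^ 2 * (u ^ 19)⁻¹ - 5 / 36 * A ^ 3 * (u ^ 15)⁻¹ / s := by
  rw [div_pow, Real.sq_sqrt hs.le]
  field_simp
  ring

theorem energy_minor_three_pos {A u s : ℝ} (hA : 0 < A) (hu : 0 < u)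
    (hs : 5 / 3 * A * u ^ 4 ≤ s) :
    0 < 1 / 6 * A ^ 2 * (u ^ 19)⁻¹ - 5 / 36 * A ^ 3 * (u ^ 15)⁻¹ / s := by
  have hle : 5 / 36 * A ^ 3 * (u ^ 15)⁻¹ / s ≤ 1 / 12 * A ^ 2 * (u ^ 19)⁻¹ :=
    calc 5 / 36 * A ^ 3 * (u ^ 15)⁻¹ / s
        _ ≤ 5 / 36 * A ^ 3 * (u ^ 15)⁻¹ / (5 / 3 * A * u ^ 4) := by gcongr
        _ = 1 / 12 * A ^ 2 * (u ^ 19)⁻¹ := by field_simp; ring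
  have : 0 < 1 / 12 * A ^ 2 * (u ^ 19)⁻¹ := by positivity
  linarith

/-- **Positive definiteness of the energy matrix.**
For `A > 0`, `v > 0`, `g ≥ 0`, the symmetric matrix `M` arising in the zero-order
energy estimate is positive definite, and its leading principal minors are
`Δ₁ = (5/9)Av^{−11/3} > 0`, `Δ₂ = (1/6)A²v^{−16/3} > 0`, and
`Δ₃ = (1/6)A²v^{−19/3} − (5/36)A³v^{−5}/((5/3)Av^{4/3}+vg) > 0`. -/
theorem energy_matrix_posdef (A v g : ℝ) (hA : 0 < A) (hv : 0 < v) (hg : 0 ≤ g)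
    (M : Matrix (Fin 3) (Fin 3) ℝ)
    (hM : M = !![(5/9) * A * v ^ (-(11:ℝ)/3), -(1/3) * A * v ^ (-(8:ℝ)/3), 0;
                 -(1/3) * A * v ^ (-(8:ℝ)/3), (1/2) * A * v ^ (-(5:ℝ)/3),
                   (1/2) * A * v ^ (-(2:ℝ)/3) /
                     Real.sqrt ((5/3) * A * v ^ ((4:ℝ)/3) + v * g);
                 0, (1/2) * A * v ^ (-(2:ℝ)/3) /
                     Real.sqrt ((5/3) * A * v ^ ((4:ℝ)/3) + v * g), v⁻¹]) :
    M.PosDef ∧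
    M 0 0 = (5/9) * A * v ^ (-(11:ℝ)/3) ∧ 0 < M 0 0 ∧
    Matrix.det !![M 0 0, M 0 1; M 1 0, M 1 1] = (1/6) * A ^ 2 * v ^ (-(16:ℝ)/3) ∧
    0 < Matrix.det !![M 0 0, M 0 1; M 1 0, M 1 1] ∧
    M.det = (1/6) * A ^ 2 * v ^ (-(19:ℝ)/3) -
      (5/36) * A ^ 3 * v ^ (-(5:ℝ)) / ((5/3) * A * v ^ ((4:ℝ)/3) + v * g) ∧
    0 < M.det := by
  obtain ⟨u, hu, rfl⟩ : ∃ u, 0 < u ∧ v = u ^ 3 :=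
    ⟨v ^ ((1 : ℝ) / 3), by positivity, by
      rw [← Real.rpow_natCast, ← Real.rpow_mul hv.le]; norm_num⟩
  subst hM
  have hs : 5 / 3 * A * u ^ 4 ≤ 5 / 3 * A * u ^ 4 + u ^ 3 * g :=
    le_add_of_nonneg_right (by positivity)
  have hs₀ : 0 < 5 / 3 * A * u ^ 4 + u ^ 3 * g := by positivity
  simp only [Real.pow_three_rpow_div_three hu.le, Real.rpow_neg hu.le, Real.rpow_neg hv.le,
    Real.rpow_ofNat, ← pow_mul, Nat.reduceMul, Matrix.det_symm_tridiag_fin_three,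
    Matrix.det_fin_two_of, Matrix.of_apply, Matrix.cons_val', Matrix.cons_val_zero,
    Matrix.cons_val_one, Matrix.cons_val_fin_one, ← sq, energy_minor_two A hu.ne',
    energy_minor_three A hu.ne' hs₀, true_and]
  have hΔ₃ := energy_minor_three_pos hA hu hs
  refine ⟨Matrix.posDef_symm_tridiag_fin_three (by positivity) ?_ ?_, by positivity,
    by positivity, hΔ₃⟩
  · rw [energy_minor_two A hu.ne']
    positivity
  · rwa [energy_minor_two A hu.ne', energy_minor_three A hu.ne' hs₀]
end
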